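/- arXiv:2405.00500 — 8 statements merged into one kernel-verified Lean document; each statement's English description precedes it below -/
import Mathlib

section
/- Let S = {v_1,…,v_n} ⊂ ℤ^n be a non-acute basis of a sublattice Λ ⊂ ℤ^n, let W = Σ_{i=1}^n v_i be its Wu element, let k_1,…,k_n be the unique integers with W = Σ_{i=1}^n k_i e_i, and set R_o = {i : k_i is odd}. If Σ_{i=1}^n k_i² > 4n − 3|R_o|, then Λ is not cubiquitous, i.e. there exists x ∈ ℤ^n with Λ ∩ (x + {0,1}^n) = ∅. -/
open Finset

/-- The standard dot product on `ℤ^n`. -/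
def dotZ {n : ℕ} (v w : Fin n → ℤ) : ℤ := ∑ i, v i * w i

/-- A sublattice `Λ ⊆ ℤ^n` is cubiquitous if every unit cube `x + {0,1}^n`
contains a point of `Λ`. -/
def Cubiquitous {n : ℕ} (Λ : Submodule ℤ (Fin n → ℤ)) : Prop :=
  ∀ x : Fin n → ℤ, ∃ v ∈ Λ, ∀ i, v i = x i ∨ v i = x i + 1

/-- A family `v_1, …, v_n` of vectors in `ℤ^n` is non-acute. -/
def NonAcute {n : ℕ} (v : Fin n → Fin n → ℤ) : Prop :=
  (∀ i, 1 ≤ dotZ (v i) (v i)) ∧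
  (∀ i j, i ≠ j → dotZ (v i) (v j) ≤ 0) ∧
  (∀ i, -(∑ j ∈ univ.erase i, dotZ (v j) (v i)) ≤ dotZ (v i) (v i))

/-! Let `W = ∑ vᵢ`. For `w = ∑ cᵢ vᵢ ∈ Λ`, non-acuteness of the Gram matrix `g` gives
`⟨w, W⟩ ≤ ⟨w, w⟩`: the difference is `∑ cᵢ(cᵢ - 1) ∑ⱼ gᵢⱼ - ½ ∑ (cᵢ - cⱼ)² gᵢⱼ ≥ 0`.
Hence `‖2w - W‖² = ‖W‖² + 4(⟨w, w⟩ - ⟨w, W⟩) ≥ ‖W‖²` for every `w ∈ Λ`. On the other hand, in the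
cube based at `x = ⌊W / 2⌋` every point `w` has `|2wᵢ - kᵢ| ≤ 1` for odd `kᵢ` and `≤ 2` for even
`kᵢ`, so `‖2w - W‖² ≤ 4n - 3|R_o| < ‖W‖²`, and that cube misses `Λ`. -/

lemma dotZ_eq_dotProduct {n : ℕ} (v w : Fin n → ℤ) : dotZ v w = v ⬝ᵥ w := rfl

lemma sum_mul_le_sum_mul_mul_of_nonpos_offDiag {ι : Type*} [Fintype ι] (g : ι → ι → ℤ)
    (hsymm : ∀ i j, g i j = g j i) (hoff : ∀ i j, i ≠ j → g i j ≤ 0)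
    (hrow : ∀ i, 0 ≤ ∑ j, g i j) (c : ι → ℤ) :
    ∑ i, ∑ j, c i * g i j ≤ ∑ i, ∑ j, c i * c j * g i j := by
  have hswap : ∑ i, ∑ j, c i * (c i - c j) * g i j = ∑ i, ∑ j, c j * (c j - c i) * g i j := by
    rw [sum_comm]
    simp only [hsymm]
  have hsq : 2 * ∑ i, ∑ j, c i * (c i - c j) * g i j = ∑ i, ∑ j, (c i - c j) ^ 2 * g i j := by
    rw [two_mul]
    nth_rewrite 2 [hswap]
    simp only [← sum_add_distrib]
    exact sum_congr rfl fun i _ => sum_congr rfl fun j _ => by ring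
  have hsq_nonpos : ∑ i, ∑ j, (c i - c j) ^ 2 * g i j ≤ 0 := by
    refine sum_nonpos fun i _ => sum_nonpos fun j _ => ?_
    rcases eq_or_ne i j with rfl | hij
    · simp
    · exact mul_nonpos_of_nonneg_of_nonpos (sq_nonneg _) (hoff i j hij)
  have hdiag : 0 ≤ ∑ i, c i * (c i - 1) * ∑ j, g i j := by
    refine sum_nonneg fun i _ => mul_nonneg ?_ (hrow i)
    rcases le_or_gt (c i) 0 with h | h <;> nlinarith
  have hsplit : ∑ i, ∑ j, c i * c j * g i j - ∑ i, ∑ j, c i * g i j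
      = ∑ i, c i * (c i - 1) * ∑ j, g i j - ∑ i, ∑ j, c i * (c i - c j) * g i j := by
    simp only [mul_sum, ← sum_sub_distrib]
    exact sum_congr rfl fun i _ => sum_congr rfl fun j _ => by ring
  linarith

lemma NonAcute.sum_dotZ_nonneg {n : ℕ} {v : Fin n → Fin n → ℤ} (hna : NonAcute v) (i : Fin n) :
    0 ≤ ∑ j, dotZ (v i) (v j) := by
  have hdom := hna.2.2 i
  have hsplit := sum_erase_add univ (fun j => dotZ (v j) (v i)) (mem_univ i)
  simp only [dotZ_eq_dotProduct, dotProduct_comm (v i)] at hdom hsplit ⊢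
  linarith

lemma NonAcute.dotZ_sum_le_dotZ_self {n : ℕ} {v : Fin n → Fin n → ℤ} (hna : NonAcute v)
    {w : Fin n → ℤ} (hw : w ∈ Submodule.span ℤ (Set.range v)) :
    dotZ w (∑ j, v j) ≤ dotZ w w := by
  obtain ⟨c, rfl⟩ := Submodule.mem_span_range_iff_exists_fun ℤ |>.mp hw
  have key := sum_mul_le_sum_mul_mul_of_nonpos_offDiag (fun i j => dotZ (v i) (v j))
    (fun i j => dotProduct_comm _ _) hna.2.1 hna.sum_dotZ_nonneg c
  rw [dotZ_eq_dotProduct, dotZ_eq_dotProduct, sum_dotProduct, sum_dotProduct]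
  simp only [dotProduct_sum, smul_dotProduct, dotProduct_smul, smul_eq_mul]
  refine key.trans_eq (sum_congr rfl fun i _ => sum_congr rfl fun j _ => ?_)
  rw [dotZ_eq_dotProduct]
  ring

lemma sq_two_mul_sub_le {a b : ℤ} (hb : b = a / 2 ∨ b = a / 2 + 1) :
    (2 * b - a) ^ 2 ≤ if Odd a then 1 else 4 := by
  split_ifs with ha
  · rw [Int.odd_iff] at ha
    obtain h | h : 2 * b - a = -1 ∨ 2 * b - a = 1 := by omega
    all_goals rw [h]; norm_num
  · rw [Int.not_odd_iff] at ha
    obtain h | h : 2 * b - a = 0 ∨ 2 * b - a = 2 := by omega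
    all_goals rw [h]; norm_num

lemma sum_ite_odd_one_four {ι : Type*} [Fintype ι] (k : ι → ℤ) :
    ∑ i, (if Odd (k i) then (1 : ℤ) else 4)
      = 4 * (Fintype.card ι : ℤ) - 3 * ((univ.filter fun i => Odd (k i)).card : ℤ) := by
  rw [sum_ite, sum_const, sum_const, ← card_univ,
    ← card_filter_add_card_filter_not (s := univ) (fun i => Odd (k i))]
  push_cast
  ring

lemma sum_sq_two_mul_sub_le {ι : Type*} [Fintype ι] {k w : ι → ℤ}
    (hw : ∀ i, w i = k i / 2 ∨ w i = k i / 2 + 1) :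
    ∑ i, (2 * w i - k i) ^ 2
      ≤ 4 * (Fintype.card ι : ℤ) - 3 * ((univ.filter fun i => Odd (k i)).card : ℤ) :=
  sum_ite_odd_one_four k ▸ sum_le_sum fun i _ => sq_two_mul_sub_le (hw i)

lemma sum_sq_two_mul_sub {n : ℕ} (k w : Fin n → ℤ) :
    ∑ i, (2 * w i - k i) ^ 2 = ∑ i, k i ^ 2 + 4 * (dotZ w w - dotZ w k) := by
  simp only [dotZ, mul_sum, ← sum_sub_distrib, ← sum_add_distrib]
  exact sum_congr rfl fun i _ => by ring

theorem stmt_0_general {n : ℕ} (v : Fin n → Fin n → ℤ) (Λ : Submodule ℤ (Fin n → ℤ))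
    (hspan : Submodule.span ℤ (Set.range v) = Λ)
    (hna : NonAcute v)
    (k : Fin n → ℤ) (hk : ∀ i, k i = (∑ j, v j) i)
    (h : ∑ i, (k i) ^ 2 > 4 * (n : ℤ) - 3 * ((univ.filter fun i => Odd (k i)).card : ℤ)) :
    ¬ Cubiquitous Λ := by
  intro hcub
  obtain ⟨w, hwΛ, hw⟩ := hcub fun i => k i / 2
  have hwu : dotZ w k ≤ dotZ w w := by
    rw [show k = ∑ j, v j from funext hk]
    exact hna.dotZ_sum_le_dotZ_self (hspan ▸ hwΛ)
  have hcube := sum_sq_two_mul_sub_le hw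
  rw [sum_sq_two_mul_sub, Fintype.card_fin] at hcube
  linarith

theorem stmt_0 {n : ℕ} (v : Fin n → Fin n → ℤ) (Λ : Submodule ℤ (Fin n → ℤ))
    (hind : LinearIndependent ℤ v) (hspan : Submodule.span ℤ (Set.range v) = Λ)
    (hna : NonAcute v)
    (k : Fin n → ℤ) (hk : ∀ i, k i = (∑ j, v j) i)
    (h : ∑ i, (k i) ^ 2 > 4 * (n : ℤ) - 3 * ((univ.filter fun i => Odd (k i)).card : ℤ)) :
    ¬ Cubiquitous Λ :=
  stmt_0_general v Λ hspan hna k hk h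
end

section
/- Let S = {v_1,…,v_n} ⊂ ℤ^n (n ≥ 3) be non-acute, and suppose there are indices i, s, t, u with E_i = {s,t,u}, ⟨v_s,v_t⟩ = −1, ⟨v_s,e_i⟩ = −⟨v_t,e_i⟩ = ±1, |⟨v_u,e_i⟩| = 1, and ⟨v_u,v_u⟩ ≥ 3. Let S' = (S \ {v_s, v_t, v_u}) ∪ {v_s + v_t, v_u − ⟨v_u,e_i⟩e_i} ⊂ ℤ^{n−1} be the corresponding contraction of S, viewed in the span of the e_j with j ≠ i. Let W = Σ k_α e_α and W' = Σ_{α≠i} k'_α e_α be the Wu elements of S and S', with R_o and R_o' the sets of indices where these coefficients are odd. Then Σ_{α=1}^n k_α² > 4n − 3|R_o| if and only if Σ_{α≠i} (k'_α)² > 4(n−1) − 3|R_o'|. -/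
/-!
Write `∑ k_α² - 4n + 3|R_o|` as a sum over the coordinates of the weight `k² - 4 + 3·[k odd]`;
the inequality says this sum is positive. The weight vanishes at `k = ±1`. Contracting
leaves every coordinate of the Wu element other than `i` unchanged, and the coordinate `i`
of `W` is `⟨v_u, e_i⟩ = ±1`, because only `v_s, v_t, v_u` meet `e_i` and the first two
cancel there. So dropping coordinate `i` changes neither the sum nor its sign.
-/

open Finset

def wuWeight (k : ℤ) : ℤ := k ^ 2 - 4 + if Odd k then 3 else 0

lemma wuWeight_eq_zero_of_isUnit {k : ℤ} (hk : IsUnit k) : wuWeight k = 0 := by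
  rcases Int.isUnit_iff.mp hk with rfl | rfl <;> decide

lemma lt_sum_sq_iff_sum_wuWeight_pos {ι : Type*} (A : Finset ι) (W : ι → ℤ) :
    4 * (#A : ℤ) - 3 * #{α ∈ A | Odd (W α)} < ∑ α ∈ A, W α ^ 2 ↔
      0 < ∑ α ∈ A, wuWeight (W α) := by
  simp only [wuWeight, sum_add_distrib, sum_sub_distrib, sum_ite, sum_const,
    nsmul_eq_mul]
  constructor <;> intro h <;> linarith

lemma sum_wuWeight_eq_sum_erase_of_isUnit {ι : Type*} [Fintype ι] [DecidableEq ι] (W : ι → ℤ)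
    {i : ι} (hi : IsUnit (W i)) :
    ∑ α, wuWeight (W α) = ∑ α ∈ univ.erase i, wuWeight (W α) := by
  rw [← sum_erase_add _ _ (mem_univ i), wuWeight_eq_zero_of_isUnit hi, add_zero]

section Triple

variable {ι M : Type*} [DecidableEq ι] [AddCommMonoid M] {s t u : ι}

lemma sum_triple (f : ι → M) (hst : s ≠ t) (hsu : s ≠ u) (htu : t ≠ u) :
    ∑ α ∈ {s, t, u}, f α = f s + f t + f u := by
  rw [sum_insert (by simp [hst, hsu]), sum_pair htu, add_assoc]

lemma sum_eq_sum_sdiff_add_triple [Fintype ι] (f : ι → M) (hst : s ≠ t) (hsu : s ≠ u)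
    (htu : t ≠ u) :
    ∑ α, f α = ∑ α ∈ univ \ {s, t, u}, f α + (f s + f t + f u) := by
  rw [← sum_triple f hst hsu htu, sum_sdiff (subset_univ _)]

end Triple

theorem stmt_2_general {n : ℕ} (v : Fin n → Fin n → ℤ)
    (i s t u : Fin n) (hst : s ≠ t) (hsu : s ≠ u) (htu : t ≠ u)
    (hE : univ.filter (fun α => v α i ≠ 0) = {s, t, u})
    (hsti : v s i = -(v t i))
    (hui : v u i = 1 ∨ v u i = -1)
    -- `W` is the Wu element of `S`
    (W : Fin n → ℤ) (hW : W = ∑ α, v α)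
    -- `W'` is the Wu element of the contraction `S'`, whose coordinates in
    -- the span of the `e_j`, `j ≠ i`, are `W' α` for `α ≠ i`
    (W' : Fin n → ℤ)
    (hW' : W' = (∑ α ∈ univ \ {s, t, u}, v α)
      + ((v s + v t) + (v u - Pi.single i (v u i)))) :
    (∑ α, (W α) ^ 2 >
        4 * (n : ℤ) - 3 * ((univ.filter fun α => Odd (W α)).card : ℤ)) ↔
    (∑ α ∈ univ.erase i, (W' α) ^ 2 >
        4 * ((n : ℤ) - 1) -
          3 * (((univ.erase i).filter fun α => Odd (W' α)).card : ℤ)) := by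
  have hWi : W i = v u i := by
    rw [hW, Finset.sum_apply, ← sum_filter_ne_zero, hE, sum_triple _ hst hsu htu, hsti]
    ring
  have hW'W : ∀ α ∈ univ.erase i, W' α = W α := by
    intro α hα
    rw [hW, hW', sum_eq_sum_sdiff_add_triple v hst hsu htu]
    simp [Pi.single_eq_of_ne (ne_of_mem_erase hα)]
  have hcard : ((#(univ.erase i) : ℕ) : ℤ) = n - 1 := by
    rw [card_erase_of_mem (mem_univ i), card_univ, Fintype.card_fin, Nat.cast_sub i.pos]
    simp
  have hcard_univ : ((#(univ : Finset (Fin n)) : ℕ) : ℤ) = n := by simp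
  rw [gt_iff_lt, gt_iff_lt, ← hcard, ← hcard_univ,
    lt_sum_sq_iff_sum_wuWeight_pos, lt_sum_sq_iff_sum_wuWeight_pos,
    sum_wuWeight_eq_sum_erase_of_isUnit W (Int.isUnit_iff.mpr (hWi ▸ hui)),
    sum_congr rfl fun α hα => congrArg wuWeight (hW'W α hα)]

theorem stmt_2 {n : ℕ} (hn : 3 ≤ n) (v : Fin n → Fin n → ℤ) (hna : NonAcute v)
    (i s t u : Fin n) (hst : s ≠ t) (hsu : s ≠ u) (htu : t ≠ u)
    (hE : univ.filter (fun α => v α i ≠ 0) = {s, t, u})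
    (hvst : dotZ (v s) (v t) = -1)
    (hsti : v s i = -(v t i)) (hsi : v s i = 1 ∨ v s i = -1)
    (hui : v u i = 1 ∨ v u i = -1)
    (hau : 3 ≤ dotZ (v u) (v u))
    -- `W` is the Wu element of `S`
    (W : Fin n → ℤ) (hW : W = ∑ α, v α)
    -- `W'` is the Wu element of the contraction `S'`, whose coordinates in
    -- the span of the `e_j`, `j ≠ i`, are `W' α` for `α ≠ i`
    (W' : Fin n → ℤ)
    (hW' : W' = (∑ α ∈ univ \ {s, t, u}, v α)
      + ((v s + v t) + (v u - Pi.single i (v u i)))) :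
    (∑ α, (W α) ^ 2 >
        4 * (n : ℤ) - 3 * ((univ.filter fun α => Odd (W α)).card : ℤ)) ↔
    (∑ α ∈ univ.erase i, (W' α) ^ 2 >
        4 * ((n : ℤ) - 1) -
          3 * (((univ.erase i).filter fun α => Odd (W' α)).card : ℤ)) :=
  stmt_2_general v i s t u hst hsu htu hE hsti hui W hW W' hW'
end

section
/- Let S = {v_1,…,v_n} ⊂ ℤ^n be an orthogonal subset with Wu element W = Σ_{i=1}^n k_i e_i, and set R_o = {i : k_i is odd}. If I(S) > n − 3|R_o|, then S is not cubiquitous. -/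
open Finset

/-- A family `v_1, …, v_n` of vectors in `ℤ^n` is orthogonal. -/
def OrthogonalSubset {n : ℕ} (v : Fin n → Fin n → ℤ) : Prop :=
  (∀ i, 1 ≤ dotZ (v i) (v i)) ∧ (∀ i j, i ≠ j → dotZ (v i) (v j) = 0)

lemma dotZ_self_nonneg {n : ℕ} (v : Fin n → ℤ) : 0 ≤ dotZ v v :=
  Finset.sum_nonneg fun i _ => mul_self_nonneg (v i)

lemma dotZ_sum_smul_self {n m : ℕ} (v : Fin m → Fin n → ℤ)
    (horth : ∀ i j, i ≠ j → dotZ (v i) (v j) = 0) (d : Fin m → ℤ) :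
    dotZ (∑ j, d j • v j) (∑ j, d j • v j) = ∑ j, d j ^ 2 * dotZ (v j) (v j) := by
  simp only [dotZ_eq_dotProduct, sum_dotProduct, dotProduct_sum, smul_dotProduct,
    dotProduct_smul, smul_eq_mul]
  refine Finset.sum_congr rfl fun j _ => ?_
  rw [Finset.sum_eq_single j (fun l _ hlj => by
    simp only [← dotZ_eq_dotProduct, horth l j hlj, mul_zero]) (by simp)]
  ring

lemma sum_dotZ_self_le_of_mem_span {n m : ℕ} (v : Fin m → Fin n → ℤ)
    (horth : ∀ i j, i ≠ j → dotZ (v i) (v j) = 0) {z : Fin n → ℤ}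
    (hz : z ∈ Submodule.span ℤ (Set.range v)) :
    ∑ j, dotZ (v j) (v j) ≤ dotZ (2 • z - ∑ j, v j) (2 • z - ∑ j, v j) := by
  obtain ⟨c, rfl⟩ := (Submodule.mem_span_range_iff_exists_fun ℤ).mp hz
  have hodd : 2 • ∑ j, c j • v j - ∑ j, v j = ∑ j, (2 * c j - 1) • v j := by
    rw [Finset.smul_sum, ← Finset.sum_sub_distrib]
    exact Finset.sum_congr rfl fun j _ => by module
  rw [hodd, dotZ_sum_smul_self v horth]
  refine Finset.sum_le_sum fun j _ => le_mul_of_one_le_left (dotZ_self_nonneg _) ?_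
  have : 2 * c j - 1 ≤ -1 ∨ 1 ≤ 2 * c j - 1 := by omega
  rcases this with h | h <;> nlinarith

def cubeCornerNearHalf {n : ℕ} (k : Fin n → ℤ) : Fin n → ℤ :=
  fun i => if Odd (k i) then (k i - 1) / 2 else k i / 2 - 1

lemma sq_two_mul_sub_le_of_mem_cube {n : ℕ} (k z : Fin n → ℤ) (i : Fin n)
    (hz : z i = cubeCornerNearHalf k i ∨ z i = cubeCornerNearHalf k i + 1) :
    (2 * z i - k i) ^ 2 ≤ 4 - 3 * if Odd (k i) then 1 else 0 := by
  unfold cubeCornerNearHalf at hz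
  split_ifs at hz ⊢ with hodd
  · obtain ⟨m, hm⟩ := hodd
    have : -1 ≤ 2 * z i - k i ∧ 2 * z i - k i ≤ 1 := by omega
    nlinarith
  · obtain ⟨m, hm⟩ := Int.not_odd_iff_even.mp hodd
    have : -2 ≤ 2 * z i - k i ∧ 2 * z i - k i ≤ 0 := by omega
    nlinarith

lemma dotZ_two_smul_sub_le_of_mem_cube {n : ℕ} (k z : Fin n → ℤ)
    (hz : ∀ i, z i = cubeCornerNearHalf k i ∨ z i = cubeCornerNearHalf k i + 1) :
    dotZ (2 • z - k) (2 • z - k) ≤ 4 * n - 3 * #{i | Odd (k i)} := by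
  calc dotZ (2 • z - k) (2 • z - k)
      ≤ ∑ i, (4 - 3 * if Odd (k i) then 1 else 0) :=
        Finset.sum_le_sum fun i _ => by
          simpa [sq] using sq_two_mul_sub_le_of_mem_cube k z i (hz i)
    _ = 4 * n - 3 * #{i | Odd (k i)} := by
        rw [Finset.sum_sub_distrib, ← Finset.mul_sum, Finset.sum_boole]
        simp [mul_comm]

theorem stmt_4 {n : ℕ} (v : Fin n → Fin n → ℤ) (horth : OrthogonalSubset v)
    (k : Fin n → ℤ) (hk : ∀ i, k i = (∑ j, v j) i)
    (h : ∑ i, (dotZ (v i) (v i) - 3) >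
      (n : ℤ) - 3 * ((univ.filter fun i => Odd (k i)).card : ℤ)) :
    ¬ Cubiquitous (Submodule.span ℤ (Set.range v)) := by
  intro hcub
  obtain ⟨z, hzΛ, hz⟩ := hcub (cubeCornerNearHalf k)
  have hW : k = ∑ j, v j := funext hk
  have lower := sum_dotZ_self_le_of_mem_span v horth.2 hzΛ
  have upper := dotZ_two_smul_sub_le_of_mem_cube k z hz
  rw [← hW] at lower
  simp only [Finset.sum_sub_distrib, Finset.sum_const, Finset.card_univ, Fintype.card_fin,
    nsmul_eq_mul] at h
  linarith
end

section
/- Let a, b, c, d ≥ 1 be integers and let M be the 4×4 integer matrix with diagonal entries a, b, c, d and all off-diagonal entries equal to −1. If det M = 0 and min{a,b,c,d} = 3, then a = b = c = d = 3. -/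
/-!
Shift every diagonal entry by 3: writing `a = 3 + x`, …, `d = 3 + w`, the determinant becomes
`16 e₁ + 8 e₂ + 3 e₃ + e₄` in the elementary symmetric polynomials of `x, y, z, w`. All its
coefficients are positive, so for `x, y, z, w ≥ 0` it vanishes only at `x = y = z = w = 0`.
-/

theorem det_fin_four_diag_neg_one {R : Type*} [CommRing R] (a b c d : R) :
    (!![a, -1, -1, -1;
        -1, b, -1, -1;
        -1, -1, c, -1;
        -1, -1, -1, d]).det =
      a * b * c * d - a * b - a * c - a * d - b * c - b * d - c * d
        - 2 * a - 2 * b - 2 * c - 2 * d - 3 := by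
  simp [Matrix.det_succ_row_zero, Fin.sum_univ_succ, Fin.succAbove]
  ring

theorem det_fin_four_three_add_diag_neg_one {R : Type*} [CommRing R] (x y z w : R) :
    (!![3 + x, -1, -1, -1;
        -1, 3 + y, -1, -1;
        -1, -1, 3 + z, -1;
        -1, -1, -1, 3 + w]).det =
      16 * (x + y + z + w)
        + 8 * (x * y + x * z + x * w + y * z + y * w + z * w)
        + 3 * (x * y * z + x * y * w + x * z * w + y * z * w)
        + x * y * z * w := by
  rw [det_fin_four_diag_neg_one]
  ring

theorem eq_three_of_det_fin_four_diag_neg_one_eq_zero {R : Type*} [CommRing R] [LinearOrder R]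
    [IsStrictOrderedRing R] {a b c d : R} (ha : 3 ≤ a) (hb : 3 ≤ b) (hc : 3 ≤ c) (hd : 3 ≤ d)
    (hdet : (!![a, -1, -1, -1;
                -1, b, -1, -1;
                -1, -1, c, -1;
                -1, -1, -1, d]).det = 0) :
    a = 3 ∧ b = 3 ∧ c = 3 ∧ d = 3 := by
  obtain ⟨x, hx, rfl⟩ : ∃ x, 0 ≤ x ∧ a = 3 + x := ⟨a - 3, by linarith, by ring⟩
  obtain ⟨y, hy, rfl⟩ : ∃ y, 0 ≤ y ∧ b = 3 + y := ⟨b - 3, by linarith, by ring⟩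
  obtain ⟨z, hz, rfl⟩ : ∃ z, 0 ≤ z ∧ c = 3 + z := ⟨c - 3, by linarith, by ring⟩
  obtain ⟨w, hw, rfl⟩ : ∃ w, 0 ≤ w ∧ d = 3 + w := ⟨d - 3, by linarith, by ring⟩
  rw [det_fin_four_three_add_diag_neg_one] at hdet
  have h₂ : 0 ≤ x * y + x * z + x * w + y * z + y * w + z * w := by positivity
  have h₃ : 0 ≤ x * y * z + x * y * w + x * z * w + y * z * w := by positivity
  have h₄ : 0 ≤ x * y * z * w := by positivity
  refine ⟨?_, ?_, ?_, ?_⟩ <;> linarith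

theorem stmt_9_general (a b c d : ℤ)
    (hdet : (!![a, -1, -1, -1;
                -1, b, -1, -1;
                -1, -1, c, -1;
                -1, -1, -1, d]).det = 0)
    (hmin : min a (min b (min c d)) = 3) :
    a = 3 ∧ b = 3 ∧ c = 3 ∧ d = 3 := by
  obtain ⟨ha, hb, hc, hd⟩ : 3 ≤ a ∧ 3 ≤ b ∧ 3 ≤ c ∧ 3 ≤ d := by
    simpa only [le_min_iff] using hmin.ge
  exact eq_three_of_det_fin_four_diag_neg_one_eq_zero ha hb hc hd hdet

theorem stmt_9 (a b c d : ℤ) (ha : 1 ≤ a) (hb : 1 ≤ b) (hc : 1 ≤ c) (hd : 1 ≤ d)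
    (hdet : (!![a, -1, -1, -1;
                -1, b, -1, -1;
                -1, -1, c, -1;
                -1, -1, -1, d]).det = 0)
    (hmin : min a (min b (min c d)) = 3) :
    a = 3 ∧ b = 3 ∧ c = 3 ∧ d = 3 :=
  stmt_9_general a b c d hdet hmin
end

section
/- Let a, b, c, d ≥ 1 be integers and let M be the 4×4 integer matrix with diagonal entries a, b, c, d and all off-diagonal entries equal to −1. If det M = 0 and two of the diagonal entries equal 7, then the remaining two diagonal entries are 1 and 3 (in some order). -/
/-!
Writing `M = diagonal (v + 1) - J` with `J` the all-ones matrix, the matrix determinant lemma gives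
`det M = ∏ₚ (vₚ + 1) · (1 - ∑ₚ 1 / (vₚ + 1))`, so for positive diagonal entries `det M = 0` says
exactly that the unit fractions `1 / (vₚ + 1)` sum to `1`. Two entries equal to `7` contribute
`1/8 + 1/8`, so the other two entries `x, y` satisfy `1/(x+1) + 1/(y+1) = 3/4`, that is
`(3x - 1)(3y - 1) = 16`, whose only positive solutions are `{x, y} = {1, 3}`.
-/

open Matrix Finset

lemma Matrix.det_diagonal_sub_of_one {n K : Type*} [Fintype n] [DecidableEq n] [Field K]
    (w : n → K) (hw : ∀ p, w p ≠ 0) :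
    (diagonal w - of fun _ _ => (1 : K)).det = (∏ p, w p) * (1 - ∑ p, (w p)⁻¹) := by
  have hfactor : diagonal w - of (fun _ _ => (1 : K)) =
      diagonal w * (1 + (replicateCol Unit (fun p => -(w p)⁻¹) : Matrix n Unit K) *
        (replicateRow Unit 1 : Matrix Unit n K)) := by
    ext p q
    rw [diagonal_mul]
    by_cases hpq : p = q
    · subst hpq; simp [mul_apply, mul_add, hw, sub_eq_add_neg]
    · simp [mul_apply, hw, hpq]
  rw [hfactor, det_mul, det_diagonal, det_one_add_replicateCol_mul_replicateRow]
  simp [dotProduct, sub_eq_add_neg]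

lemma det_ite_neg_one_eq_zero_iff {n : Type*} [Fintype n] [DecidableEq n] (v : n → ℤ)
    (hv : ∀ p, v p ≠ -1) :
    (of fun p q => if p = q then v p else -1 : Matrix n n ℤ).det = 0 ↔
      ∑ p, ((v p : ℚ) + 1)⁻¹ = 1 := by
  have hv' : ∀ p, (v p : ℚ) + 1 ≠ 0 := fun p => by
    exact_mod_cast (by have := hv p; omega : v p + 1 ≠ 0)
  have hcast : (Int.castRingHom ℚ).mapMatrix (of fun p q => if p = q then v p else -1) =
      diagonal (fun p => (v p : ℚ) + 1) - of fun _ _ => 1 := by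
    ext p q
    by_cases hpq : p = q
    · subst hpq; simp
    · simp [diagonal, hpq]
  rw [← (Int.cast_injective (α := ℚ)).eq_iff, Int.cast_zero, ← eq_intCast (Int.castRingHom ℚ),
    RingHom.map_det, hcast, det_diagonal_sub_of_one _ hv', mul_eq_zero,
    prod_eq_zero_iff, sub_eq_zero, eq_comm]
  simp [hv']

lemma Fin.sum_univ_four_of_pairwise_ne {M : Type*} [AddCommMonoid M] (f : Fin 4 → M)
    {i j k l : Fin 4} (hij : i ≠ j) (hik : i ≠ k) (hil : i ≠ l) (hjk : j ≠ k) (hjl : j ≠ l)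
    (hkl : k ≠ l) :
    ∑ p, f p = f i + f j + f k + f l := by
  have huniv : ({i, j, k, l} : Finset (Fin 4)) = univ := by
    apply eq_univ_of_card
    rw [card_insert_of_notMem (by simp [hij, hik, hil]),
      card_insert_of_notMem (by simp [hjk, hjl]), card_pair hkl]
    rfl
  rw [← huniv, sum_insert (by simp [hij, hik, hil]), sum_insert (by simp [hjk, hjl]),
    sum_pair hkl, add_assoc, add_assoc]

lemma eq_one_three_or_three_one_of_inv_add_inv {x y : ℤ} (hx : 1 ≤ x) (hy : 1 ≤ y)
    (h : ((x : ℚ) + 1)⁻¹ + ((y : ℚ) + 1)⁻¹ = 3 / 4) :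
    (x = 1 ∧ y = 3) ∨ (x = 3 ∧ y = 1) := by
  have hxy : (3 * x - 1) * (3 * y - 1) = 16 := by
    have hx' : (x : ℚ) + 1 ≠ 0 := by positivity
    have hy' : (y : ℚ) + 1 ≠ 0 := by positivity
    field_simp at h
    have : ((3 * x - 1) * (3 * y - 1) : ℚ) = 16 := by linarith
    exact_mod_cast this
  have hx3 : x ≤ 3 := by nlinarith
  have hy3 : y ≤ 3 := by nlinarith
  interval_cases x <;> interval_cases y <;> omega


theorem stmt_11 (a b c d : ℤ) (ha : 1 ≤ a) (hb : 1 ≤ b) (hc : 1 ≤ c) (hd : 1 ≤ d)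
    (hdet : (!![a, -1, -1, -1;
                -1, b, -1, -1;
                -1, -1, c, -1;
                -1, -1, -1, d]).det = 0)
    (i j : Fin 4) (hij : i ≠ j)
    (hi7 : ![a, b, c, d] i = 7) (hj7 : ![a, b, c, d] j = 7) :
    ∀ k l : Fin 4, k ≠ l → k ≠ i → k ≠ j → l ≠ i → l ≠ j →
      (![a, b, c, d] k = 1 ∧ ![a, b, c, d] l = 3) ∨
      (![a, b, c, d] k = 3 ∧ ![a, b, c, d] l = 1) := by
  intro k l hkl hki hkj hli hlj
  set v := ![a, b, c, d]
  have hpos : ∀ p, 1 ≤ v p := by intro p; fin_cases p <;> assumption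
  have hM : !![a, -1, -1, -1; -1, b, -1, -1; -1, -1, c, -1; -1, -1, -1, d] =
      of fun p q => if p = q then v p else -1 := by
    ext p q; fin_cases p <;> fin_cases q <;> rfl
  have hsum := (det_ite_neg_one_eq_zero_iff v fun p => by have := hpos p; omega).1 (hM ▸ hdet)
  rw [Fin.sum_univ_four_of_pairwise_ne _ hij hki.symm hli.symm hkj.symm hlj.symm hkl,
    hi7, hj7] at hsum
  exact eq_one_three_or_three_one_of_inv_add_inv (hpos k) (hpos l)
    (by norm_num at hsum ⊢; linarith)
end

section
/- Let a, b, c, d ≥ 1 be integers and let M be the 4×4 integer matrix with diagonal entries a, b, c, d and all off-diagonal entries equal to −1. If det M = 0 and two of the diagonal entries equal 5, then the remaining two diagonal entries are either 1 and 5 (in some order) or both equal to 2. -/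
/-!
Relabelling the rows and columns simultaneously does not change the determinant, so the two
entries equal to `5` may be taken to be `a` and `b`. Then `det M = 12 (2cd - c - d - 4)`, and
`det M = 0` becomes `(2c - 1)(2d - 1) = 9`, whose positive solutions are `(1, 5)`, `(5, 1)` and
`(2, 2)`.
-/

namespace Matrix

variable {ι R : Type*} [DecidableEq ι]

def diagNegOne [Ring R] (v : ι → R) : Matrix ι ι R :=
  of fun p q => if p = q then v p else -1

variable [Fintype ι] [CommRing R]

theorem det_diagNegOne_comp_equiv (v : ι → R) (σ : ι ≃ ι) :
    (diagNegOne (v ∘ σ)).det = (diagNegOne v).det := by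
  rw [← det_submatrix_equiv_self σ (diagNegOne v)]
  congr 1
  ext p q
  simp [diagNegOne, σ.injective.eq_iff]

theorem det_diagNegOne_fin_four (v : Fin 4 → R) :
    (diagNegOne v).det = v 0 * v 1 * v 2 * v 3 - v 0 * v 1 - v 0 * v 2 - v 0 * v 3 - v 1 * v 2
      - v 1 * v 3 - v 2 * v 3 - 2 * v 0 - 2 * v 1 - 2 * v 2 - 2 * v 3 - 3 := by
  rw [det_succ_row_zero]
  simp [diagNegOne, Fin.sum_univ_succ, det_fin_three, Fin.succAbove]
  ring

theorem det_diagNegOne_of_two_eq_five (v : Fin 4 → R) {i j k l : Fin 4} (hij : i ≠ j)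
    (hki : k ≠ i) (hkj : k ≠ j) (hli : l ≠ i) (hlj : l ≠ j) (hkl : k ≠ l)
    (hi : v i = 5) (hj : v j = 5) :
    (diagNegOne v).det = 12 * (2 * v k * v l - v k - v l - 4) := by
  have hinj : Function.Injective ![i, j, k, l] := by
    intro p q h
    fin_cases p <;> fin_cases q <;> simp_all [eq_comm]
  let σ := Equiv.ofBijective _ (Finite.injective_iff_bijective.mp hinj)
  rw [← det_diagNegOne_comp_equiv v σ, det_diagNegOne_fin_four]
  simp [σ, hi, hj]
  ring

end Matrix

theorem Int.eq_one_five_or_eq_five_one_or_eq_two_two {x y : ℤ} (hx : 1 ≤ x) (hy : 1 ≤ y)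
    (h : 2 * x * y - x - y - 4 = 0) :
    (x = 1 ∧ y = 5) ∨ (x = 5 ∧ y = 1) ∨ (x = 2 ∧ y = 2) := by
  have h9 : (2 * x - 1) * (2 * y - 1) = 9 := by linear_combination 2 * h
  have hx5 : x ≤ 5 := by nlinarith
  interval_cases x <;> omega

theorem stmt_12 (a b c d : ℤ) (ha : 1 ≤ a) (hb : 1 ≤ b) (hc : 1 ≤ c) (hd : 1 ≤ d)
    (hdet : (!![a, -1, -1, -1;
                -1, b, -1, -1;
                -1, -1, c, -1;
                -1, -1, -1, d]).det = 0)
    (i j : Fin 4) (hij : i ≠ j)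
    (hi5 : ![a, b, c, d] i = 5) (hj5 : ![a, b, c, d] j = 5) :
    ∀ k l : Fin 4, k ≠ l → k ≠ i → k ≠ j → l ≠ i → l ≠ j →
      (![a, b, c, d] k = 1 ∧ ![a, b, c, d] l = 5) ∨
      (![a, b, c, d] k = 5 ∧ ![a, b, c, d] l = 1) ∨
      (![a, b, c, d] k = 2 ∧ ![a, b, c, d] l = 2) := by
  intro k l hkl hki hkj hli hlj
  have hM : !![a, -1, -1, -1; -1, b, -1, -1; -1, -1, c, -1; -1, -1, -1, d] =
      Matrix.diagNegOne ![a, b, c, d] := by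
    ext p q
    fin_cases p <;> fin_cases q <;> rfl
  have hpos : ∀ m, 1 ≤ ![a, b, c, d] m := by
    intro m
    fin_cases m <;> assumption
  rw [hM, Matrix.det_diagNegOne_of_two_eq_five _ hij hki hkj hli hlj hkl hi5 hj5] at hdet
  exact Int.eq_one_five_or_eq_five_one_or_eq_two_two (hpos k) (hpos l) (by linarith)
end

section
/- If S = {v_1,…,v_n} ⊂ ℤ^n is an orthogonal subset with |V_α| ≥ 2 for all α, then p_1(S) = 0; that is, no standard basis vector e_j has exactly one of the v_i with nonzero j-th coordinate. -/
open Finset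

/-!
If the rows `v_i` of the square matrix `M` are orthogonal, then `M Mᵀ = D` is an invertible
diagonal matrix, so `Mᵀ D⁻¹ M = 1`: the columns of `M` are orthogonal for the weights `D⁻¹`.
If column `j` is supported on the single row `i`, pairing it with column `l ≠ j` leaves only
`v_i j · v_i l / D_i = 0`, so `v_i` is a multiple of `e_j`, which `|V_i| ≥ 2` forbids.
-/

open Matrix

namespace Matrix

variable {ι K : Type*} [Fintype ι] [DecidableEq ι] [Field K]

theorem transpose_mul_diagonal_inv_mul_eq_one {M : Matrix ι ι K} {d : ι → K}
    (hd : ∀ i, d i ≠ 0) (hM : M * Mᵀ = diagonal d) : Mᵀ * diagonal d⁻¹ * M = 1 := by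
  refine mul_eq_one_comm.mp ?_
  rw [← Matrix.mul_assoc, hM, diagonal_mul_diagonal]
  ext a b
  simp [one_apply, diagonal_apply, hd]

theorem row_eq_zero_of_col_eq_single {M : Matrix ι ι K} {d : ι → K}
    (hd : ∀ i, d i ≠ 0) (hM : M * Mᵀ = diagonal d) {i j : ι} (hij : M i j ≠ 0)
    (hcol : ∀ k, k ≠ i → M k j = 0) {l : ι} (hl : l ≠ j) : M i l = 0 := by
  have hentry := congr_fun₂ (transpose_mul_diagonal_inv_mul_eq_one hd hM) j l
  rw [mul_apply] at hentry
  simp only [mul_diagonal, transpose_apply, one_apply_ne hl.symm] at hentry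
  rw [sum_eq_single i (fun k _ hk => by rw [hcol k hk, zero_mul, zero_mul]) (by simp)] at hentry
  simpa [hij, hd i] using hentry

end Matrix

theorem OrthogonalSubset.mul_transpose_eq_diagonal {n : ℕ} {v : Fin n → Fin n → ℤ}
    (horth : OrthogonalSubset v) :
    (of v).map (Int.cast : ℤ → ℚ) * ((of v).map Int.cast)ᵀ
      = diagonal fun i => (dotZ (v i) (v i) : ℚ) := by
  ext a b
  rcases eq_or_ne a b with rfl | hab
  · simp [mul_apply, dotZ]
  · simp only [mul_apply, transpose_apply, map_apply, of_apply, diagonal_apply_ne _ hab]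
    exact_mod_cast horth.2 a b hab

theorem stmt_13 {n : ℕ} (v : Fin n → Fin n → ℤ) (horth : OrthogonalSubset v)
    (hV : ∀ α, 2 ≤ (univ.filter fun j => v α j ≠ 0).card) :
    (univ.filter fun j => (univ.filter fun i => v i j ≠ 0).card = 1).card = 0 := by
  rw [card_eq_zero, filter_eq_empty_iff]
  intro j _ hj
  obtain ⟨i, hi⟩ := card_eq_one.mp hj
  have hsupp : ∀ k, v k j ≠ 0 ↔ k = i := fun k => by
    simpa using congrArg (k ∈ ·) hi
  obtain ⟨l, hl, hlj⟩ := exists_mem_ne (hV i) j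
  have hd : ∀ k, (dotZ (v k) (v k) : ℚ) ≠ 0 := fun k =>
    Int.cast_ne_zero.mpr (by linarith [horth.1 k])
  have hil : (v i l : ℚ) = 0 :=
    row_eq_zero_of_col_eq_single hd horth.mul_transpose_eq_diagonal
      (by simpa using (hsupp i).mpr rfl) (fun k hk => by simpa using mt (hsupp k).mp hk) hlj
  exact (mem_filter.mp hl).2 (by exact_mod_cast hil)
end

section
/- Let S = {v_1,…,v_n} ⊂ ℤ^n be an orthogonal subset with |V_α| ≥ 2 for all α. Suppose i is an index with E_i = {s, t} (s ≠ t) and |⟨v_s,e_i⟩| = |⟨v_t,e_i⟩| = 1. Then there exist an index j ≠ i with |E_j| = 2 and signs ε_s, ε_t, ε ∈ {−1, 1} such that ε_s·v_s = e_i + ε·e_j and ε_t·v_t = e_i − ε·e_j. -/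
open Finset Matrix

lemma one_le_mul_self {a : ℤ} (h : a ≠ 0) : 1 ≤ a * a := by
  rcases h.lt_or_gt with h|h <;> nlinarith

lemma card_le_dot {n : ℕ} (w : Fin n → ℤ) :
    ((univ.filter fun j => w j ≠ 0).card : ℤ) ≤ dotZ w w := by
  classical
  have h1 : ((univ.filter fun j => w j ≠ 0).card : ℤ)
      = ∑ j ∈ univ.filter fun j => w j ≠ 0, (1 : ℤ) := by simp
  rw [h1, dotZ]
  have h2 : ∑ j ∈ univ.filter (fun j => w j ≠ 0), (1:ℤ)
      ≤ ∑ j ∈ univ.filter (fun j => w j ≠ 0), w j * w j := by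
    apply Finset.sum_le_sum
    intro j hj
    exact one_le_mul_self (mem_filter.mp hj).2
  refine h2.trans ?_
  apply Finset.sum_le_sum_of_subset_of_nonneg (subset_univ _)
  intro j _ _
  exact mul_self_nonneg _

lemma two_support {n : ℕ} (w : Fin n → ℤ) (i : Fin n) (hw : dotZ w w = 2)
    (hcard : 2 ≤ (univ.filter fun j => w j ≠ 0).card) (hi : w i ≠ 0) :
    ∃ j, j ≠ i ∧ (w j = 1 ∨ w j = -1) ∧ (w i = 1 ∨ w i = -1) ∧
      ∀ m, m ≠ i → m ≠ j → w m = 0 := by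
  classical
  set F := univ.filter fun j => w j ≠ 0 with hF
  have hsum : ∑ j ∈ F, w j * w j = 2 := by
    rw [← hw, dotZ]
    apply Finset.sum_subset (subset_univ _)
    intro j _ hj
    have : w j = 0 := by
      by_contra h
      exact hj (mem_filter.mpr ⟨mem_univ _, h⟩)
    simp [this]
  have hone : ∀ j ∈ F, 1 ≤ w j * w j := by
    intro j hj
    exact one_le_mul_self (mem_filter.mp hj).2
  have hcard2 : F.card = 2 := by
    have : (F.card : ℤ) ≤ 2 := by
      calc (F.card : ℤ) = ∑ j ∈ F, (1:ℤ) := by simp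
        _ ≤ ∑ j ∈ F, w j * w j := Finset.sum_le_sum hone
        _ = 2 := hsum
    omega
  have heach : ∀ j ∈ F, w j * w j = 1 := by
    intro j hj
    have h1 := hone j hj
    have h2 : ∑ m ∈ F.erase j, w m * w m = 2 - w j * w j := by
      have h : w j * w j + ∑ x ∈ F.erase j, w x * w x = 2 := by
        rw [← hsum]; exact Finset.add_sum_erase F (fun m => w m * w m) hj
      linarith
    have h3 : (F.erase j).card = 1 := by
      rw [Finset.card_erase_of_mem hj, hcard2]
    have h4 : (1 : ℤ) ≤ ∑ m ∈ F.erase j, w m * w m := by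
      calc (1:ℤ) = ∑ m ∈ F.erase j, (1:ℤ) := by rw [Finset.sum_const, h3]; simp
        _ ≤ _ := Finset.sum_le_sum (fun m hm => hone m (Finset.mem_of_mem_erase hm))
    have h5 := hone j hj
    linarith
  have hiF : i ∈ F := mem_filter.mpr ⟨mem_univ _, hi⟩
  obtain ⟨a, b, hab, hFab⟩ := Finset.card_eq_two.mp hcard2
  have hwi : w i = 1 ∨ w i = -1 := mul_self_eq_one_iff.mp (heach i hiF)
  have hmem : ∀ m, m ∈ F ↔ (m = a ∨ m = b) := by
    intro m; rw [hFab]; simp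
  rcases (hmem i).mp hiF with rfl | rfl
  · refine ⟨b, fun h => hab h.symm, mul_self_eq_one_iff.mp (heach b (by rw [hFab]; simp)), hwi, ?_⟩
    intro m hmi hmb
    by_contra h
    rcases (hmem m).mp (mem_filter.mpr ⟨mem_univ _, h⟩) with rfl | rfl
    · exact hmi rfl
    · exact hmb rfl
  · refine ⟨a, fun h => hab h, mul_self_eq_one_iff.mp (heach a (by rw [hFab]; simp)), hwi, ?_⟩
    intro m hmi hma
    by_contra h
    rcases (hmem m).mp (mem_filter.mpr ⟨mem_univ _, h⟩) with rfl | rfl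
    · exact hma rfl
    · exact hmi rfl

lemma expand {n : ℕ} (v : Fin n → Fin n → ℤ)
    (hnz : ∀ α, dotZ (v α) (v α) ≠ 0)
    (horth : ∀ α β, α ≠ β → dotZ (v α) (v β) = 0) (i : Fin n) :
    ∃ c : Fin n → ℚ, ∀ j, (∑ α, (v α j : ℚ) * c α) = (if j = i then (1:ℚ) else 0) := by
  classical
  set M : Matrix (Fin n) (Fin n) ℚ := Matrix.of fun α j => (v α j : ℚ) with hM
  have hMMT : M * M.transpose = Matrix.diagonal (fun α => ((dotZ (v α) (v α) : ℤ) : ℚ)) := by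
    ext α β
    rw [Matrix.mul_apply, Matrix.diagonal_apply]
    by_cases h : α = β
    · subst h
      rw [if_pos rfl]
      push_cast [dotZ]
      simp [hM]
    · rw [if_neg h]
      have h0 := horth α β h
      have : ((dotZ (v α) (v β) : ℤ) : ℚ) = 0 := by exact_mod_cast h0
      rw [← this]
      push_cast [dotZ]
      simp [hM]
  have hdet : IsUnit M.det := by
    have h1 : M.det * M.det = ∏ α, ((dotZ (v α) (v α) : ℤ) : ℚ) := by
      calc M.det * M.det = (M * M.transpose).det := by
            rw [Matrix.det_mul, Matrix.det_transpose]
        _ = ∏ α, ((dotZ (v α) (v α) : ℤ) : ℚ) := by rw [hMMT, Matrix.det_diagonal]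
    have h2 : M.det ≠ 0 := by
      intro h
      rw [h, mul_zero] at h1
      have : ∏ α, ((dotZ (v α) (v α) : ℤ) : ℚ) ≠ 0 :=
        Finset.prod_ne_zero_iff.mpr fun α _ => by exact_mod_cast hnz α
      exact this h1.symm
    exact isUnit_iff_ne_zero.mpr h2
  have hdetT : IsUnit M.transpose.det := by rwa [Matrix.det_transpose]
  refine ⟨(M.transpose)⁻¹ *ᵥ (fun j => if j = i then (1:ℚ) else 0), ?_⟩
  have hc : M.transpose *ᵥ ((M.transpose)⁻¹ *ᵥ (fun j => if j = i then (1:ℚ) else 0))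
      = (fun j => if j = i then (1:ℚ) else 0) := by
    rw [Matrix.mulVec_mulVec, Matrix.mul_nonsing_inv _ hdetT, Matrix.one_mulVec]
  intro j
  have := congrFun hc j
  rw [← this]
  rw [Matrix.mulVec]
  simp [dotProduct, hM]

theorem stmt_14 {n : ℕ} (v : Fin n → Fin n → ℤ) (horth : OrthogonalSubset v)
    (hV : ∀ α, 2 ≤ (univ.filter fun j => v α j ≠ 0).card)
    (i : Fin n) (s t : Fin n) (hst : s ≠ t)
    (hE : univ.filter (fun α => v α i ≠ 0) = {s, t})
    (hs1 : v s i = 1 ∨ v s i = -1) (ht1 : v t i = 1 ∨ v t i = -1) :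
    ∃ j : Fin n, j ≠ i ∧ (univ.filter fun α => v α j ≠ 0).card = 2 ∧
      ∃ εs εt ε : ℤ, (εs = 1 ∨ εs = -1) ∧ (εt = 1 ∨ εt = -1) ∧ (ε = 1 ∨ ε = -1) ∧
        εs • v s = Pi.single i (1 : ℤ) + ε • Pi.single j (1 : ℤ) ∧
        εt • v t = Pi.single i (1 : ℤ) - ε • Pi.single j (1 : ℤ) := by
  classical
  obtain ⟨hnorm, horth'⟩ := horth
  have hvsi : v s i ≠ 0 := by rcases hs1 with h|h <;> rw [h] <;> decide
  have hvti : v t i ≠ 0 := by rcases ht1 with h|h <;> rw [h] <;> decide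
  have hzero : ∀ α, α ≠ s → α ≠ t → v α i = 0 := by
    intro α hαs hαt
    by_contra h
    have : α ∈ ({s, t} : Finset (Fin n)) := by
      rw [← hE]; exact mem_filter.mpr ⟨mem_univ _, h⟩
    simp only [mem_insert, mem_singleton] at this
    tauto
  have h2le : ∀ α, 2 ≤ dotZ (v α) (v α) := by
    intro α
    have := card_le_dot (v α)
    have := hV α
    omega
  have hnz : ∀ α, dotZ (v α) (v α) ≠ 0 := fun α => by have := h2le α; omega
  -- rational expansion of e_i
  obtain ⟨c, hc⟩ := expand v hnz horth' i
  have key : ∀ β, (v β i : ℚ) = c β * ((dotZ (v β) (v β) : ℤ) : ℚ) := by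
    intro β
    have h1 : (v β i : ℚ) = ∑ j, (v β j : ℚ) * (if j = i then (1:ℚ) else 0) := by
      simp [mul_ite]
    rw [h1]
    calc ∑ j, (v β j : ℚ) * (if j = i then (1:ℚ) else 0)
        = ∑ j, (v β j : ℚ) * ∑ α, (v α j : ℚ) * c α := by
          refine Finset.sum_congr rfl fun j _ => ?_; rw [hc j]
      _ = ∑ α, (∑ j, (v β j : ℚ) * (v α j : ℚ)) * c α := by
          simp_rw [Finset.mul_sum, Finset.sum_mul]
          rw [Finset.sum_comm]
          refine Finset.sum_congr rfl fun α _ => Finset.sum_congr rfl fun j _ => by ring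
      _ = ∑ α, ((dotZ (v β) (v α) : ℤ) : ℚ) * c α := by
          refine Finset.sum_congr rfl fun α _ => ?_
          congr 1
          push_cast [dotZ]
          rfl
      _ = c β * ((dotZ (v β) (v β) : ℤ) : ℚ) := by
          rw [Finset.sum_eq_single β]
          · ring
          · intro α _ hα
            rw [horth' β α (fun h => hα h.symm)]
            simp
          · simp
  -- evaluate expansion at coordinate i
  have hone : (1 : ℚ) = (v s i : ℚ) * c s + (v t i : ℚ) * c t := by
    have h1 := hc i
    rw [if_pos rfl] at h1
    rw [← h1]
    rw [← Finset.sum_subset (subset_univ ({s, t} : Finset (Fin n)))]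
    · rw [Finset.sum_pair hst]
    · intro α _ hα
      simp only [mem_insert, mem_singleton] at hα
      push_neg at hα
      rw [hzero α hα.1 hα.2]
      simp
  set A := dotZ (v s) (v s) with hA
  set B := dotZ (v t) (v t) with hB
  have hcs : (v s i : ℚ) * c s = 1 / (A : ℚ) := by
    have hk := key s
    have hAne : (A : ℚ) ≠ 0 := by exact_mod_cast hnz s
    have hsq : (v s i : ℚ) * (v s i : ℚ) = 1 := by
      rcases hs1 with h|h <;> rw [h] <;> norm_num
    field_simp
    calc (v s i : ℚ) * c s * (A:ℚ) = (v s i : ℚ) * (c s * (A:ℚ)) := by ring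
      _ = (v s i : ℚ) * (v s i : ℚ) := by rw [← hk]
      _ = 1 := hsq
  have hct : (v t i : ℚ) * c t = 1 / (B : ℚ) := by
    have hk := key t
    have hBne : (B : ℚ) ≠ 0 := by exact_mod_cast hnz t
    have hsq : (v t i : ℚ) * (v t i : ℚ) = 1 := by
      rcases ht1 with h|h <;> rw [h] <;> norm_num
    field_simp
    calc (v t i : ℚ) * c t * (B:ℚ) = (v t i : ℚ) * (c t * (B:ℚ)) := by ring
      _ = (v t i : ℚ) * (v t i : ℚ) := by rw [← hk]
      _ = 1 := hsq
  have hAB : A * B = A + B := by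
    have h1 : (1:ℚ) = 1/(A:ℚ) + 1/(B:ℚ) := by rw [← hcs, ← hct]; exact hone
    have hAne : (A : ℚ) ≠ 0 := by exact_mod_cast hnz s
    have hBne : (B : ℚ) ≠ 0 := by exact_mod_cast hnz t
    have h2 : ((A:ℚ) * B = A + B) := by field_simp at h1; linarith
    exact_mod_cast h2
  have hA2 : A = 2 := by nlinarith [h2le s, h2le t]
  have hB2 : B = 2 := by nlinarith [h2le s, h2le t]
  -- structure of v s and v t
  obtain ⟨j, hji, hvsj, _, hsrest⟩ := two_support (v s) i hA2 (hV s) hvsi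
  obtain ⟨k, hki, hvtk, _, htrest⟩ := two_support (v t) i hB2 (hV t) hvti
  -- j = k from orthogonality
  have hdotst := horth' s t hst
  have hsum2 : dotZ (v s) (v t) = v s i * v t i + v s j * v t j := by
    rw [dotZ, ← Finset.sum_subset (subset_univ ({i, j} : Finset (Fin n)))]
    · rw [Finset.sum_pair (Ne.symm hji)]
    · intro m _ hm
      simp only [mem_insert, mem_singleton] at hm
      push_neg at hm
      rw [hsrest m hm.1 hm.2]
      simp
  have hjk : j = k := by
    by_contra h
    have : v t j = 0 := htrest j hji h
    rw [hdotst, this, mul_zero, add_zero] at hsum2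
    rcases hs1 with h1|h1 <;> rcases ht1 with h2|h2 <;> rw [h1, h2] at hsum2 <;> norm_num at hsum2
  subst hjk
  have hrel : v s i * v t i + v s j * v t j = 0 := by rw [← hsum2, hdotst]
  have hvsi2 : v s i * v s i = 1 := by rcases hs1 with h|h <;> rw [h] <;> norm_num
  have hvtj2 : v t j * v t j = 1 := by rcases hvtk with h|h <;> rw [h] <;> norm_num
  have hvti2 : v t i * v t i = 1 := by rcases ht1 with h|h <;> rw [h] <;> norm_num
  have hkey2 : v t i * v t j = -(v s i * v s j) := by
    linear_combination (v s i * v t j) * hrel - (v t i * v t j) * hvsi2 - (v s i * v s j) * hvtj2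
  -- the column j has exactly two nonzero entries
  have hEj : univ.filter (fun α => v α j ≠ 0) = {s, t} := by
    ext α
    simp only [mem_filter, mem_univ, true_and, mem_insert, mem_singleton]
    constructor
    · intro h
      by_contra hcon
      push_neg at hcon
      have hαi : v α i = 0 := hzero α hcon.1 hcon.2
      have hdot := horth' α s (hcon.1)
      have hd2 : dotZ (v α) (v s) = v α i * v s i + v α j * v s j := by
        rw [dotZ, ← Finset.sum_subset (subset_univ ({i, j} : Finset (Fin n)))]
        · rw [Finset.sum_pair (Ne.symm hji)]
        · intro m _ hm
          simp only [mem_insert, mem_singleton] at hm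
          push_neg at hm
          rw [hsrest m hm.1 hm.2]
          ring
      rw [hdot, hαi, zero_mul, zero_add] at hd2
      have : v α j = 0 := by rcases hvsj with h1|h1 <;> rw [h1] at hd2 <;> linarith
      exact h this
    · rintro (rfl|rfl)
      · rcases hvsj with h1|h1 <;> rw [h1] <;> decide
      · rcases hvtk with h1|h1 <;> rw [h1] <;> decide
  refine ⟨j, hji, by rw [hEj]; exact Finset.card_pair hst,
    v s i, v t i, v s i * v s j, hs1, ht1, ?_, ?_, ?_⟩
  · rcases hs1 with h1|h1 <;> rcases hvsj with h2|h2 <;> rw [h1, h2] <;> norm_num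
  · funext m
    simp only [Pi.smul_apply, Pi.add_apply, smul_eq_mul, Pi.single_apply]
    by_cases hmi : m = i
    · subst hmi
      rw [if_pos rfl, if_neg (Ne.symm hji)]
      rw [mul_zero, add_zero, hvsi2]
    · by_cases hmj : m = j
      · subst hmj
        rw [if_neg hmi, if_pos rfl]
        ring
      · rw [if_neg hmi, if_neg hmj, hsrest m hmi hmj]
        ring
  · funext m
    simp only [Pi.smul_apply, Pi.sub_apply, smul_eq_mul, Pi.single_apply]
    by_cases hmi : m = i
    · subst hmi
      rw [if_pos rfl, if_neg (Ne.symm hji)]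
      rw [mul_zero, sub_zero, hvti2]
    · by_cases hmj : m = j
      · subst hmj
        rw [if_neg hmi, if_pos rfl, hkey2]
        ring
      · rw [if_neg hmi, if_neg hmj, htrest m hmi hmj]
        ring
end
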